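/- The chromatic number of G is exactly 4. -/

import Mathlib

/-!
Upper bound: colour `x` by the quadrant of `x₂ • (x₀, x₁)` when `x₂ ≠ 0`. This is invariant under
`x ↦ -x`, and for orthogonal `x, y` off the equator the two quadrant vectors have inner product
`-(x₂ y₂)² < 0`, so they lie in different quadrants. The equator, being orthogonal to the poles,
gets the three colours other than theirs.

Lower bound: in a 3-colouring each axis `eₖ` forces the two face diagonals of the cube orthogonal
to it to take the two other colours, and then some body diagonal of the cube is orthogonal to three
face diagonals of three different colours.
-/

open scoped RealInnerProductSpace

/-- The graph on the unit sphere in `ℝ³` where two unit vectors are adjacent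
iff they are orthogonal. -/
def sphereGraph : SimpleGraph {x : EuclideanSpace ℝ (Fin 3) // ‖x‖ = 1} where
  Adj u v := ⟪(u : EuclideanSpace ℝ (Fin 3)), (v : EuclideanSpace ℝ (Fin 3))⟫ = 0
  symm := ⟨fun u v h => by rwa [real_inner_comm]⟩
  loopless := ⟨fun u h => by
    have : ⟪(u : EuclideanSpace ℝ (Fin 3)), (u : EuclideanSpace ℝ (Fin 3))⟫ = 1 := by
      rw [real_inner_self_eq_norm_sq, u.2]; norm_num
    rw [h] at this
    exact one_ne_zero this.symm⟩

local notation "ℝ³" => EuclideanSpace ℝ (Fin 3)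

namespace EuclideanSpace

theorem inner_fin_three (x y : ℝ³) : ⟪x, y⟫ = x 0 * y 0 + x 1 * y 1 + x 2 * y 2 := by
  simp only [PiLp.inner_apply, RCLike.inner_apply, conj_trivial, Fin.sum_univ_three]
  ring

theorem eq_zero_iff_fin_three (x : ℝ³) : x = 0 ↔ x 0 = 0 ∧ x 1 = 0 ∧ x 2 = 0 := by
  simp [← WithLp.ofLp_eq_zero, funext_iff, Fin.forall_fin_succ]

end EuclideanSpace

theorem mul_nonneg_of_nonneg_iff_nonneg {α : Type*} [Ring α] [LinearOrder α]
    [IsStrictOrderedRing α] {a b : α} (h : 0 ≤ a ↔ 0 ≤ b) : 0 ≤ a * b := by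
  by_cases ha : 0 ≤ a
  · exact mul_nonneg ha (h.mp ha)
  · exact mul_nonneg_of_nonpos_of_nonpos (le_of_not_ge ha) (le_of_not_ge (mt h.mpr ha))

noncomputable def sphereColor (x : ℝ³) : Bool × Bool :=
  if x 2 ≠ 0 then (decide (0 ≤ x 2 * x 0), decide (0 ≤ x 2 * x 1))
  else (decide (x 0 * x 1 < 0 ∨ x 0 = 0), false)

theorem sphereColor_ne_of_two_ne_zero {x y : ℝ³} (hx₂ : x 2 ≠ 0) (hy₂ : y 2 ≠ 0)
    (h : ⟪x, y⟫ = 0) : sphereColor x ≠ sphereColor y := by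
  simp only [sphereColor, hx₂, hy₂, ne_eq, not_false_eq_true, if_true, Prod.mk.injEq,
    decide_eq_decide]
  rintro ⟨h₀, h₁⟩
  rw [EuclideanSpace.inner_fin_three] at h
  have hquad : x 2 * x 0 * (y 2 * y 0) + x 2 * x 1 * (y 2 * y 1) = -(x 2 * y 2) ^ 2 := by
    linear_combination (x 2 * y 2) * h
  have : 0 < (x 2 * y 2) ^ 2 := by positivity
  linarith [mul_nonneg_of_nonneg_iff_nonneg h₀, mul_nonneg_of_nonneg_iff_nonneg h₁]

theorem sphereColor_ne_of_two_ne_zero_of_two_eq_zero {x y : ℝ³} (hy : y ≠ 0) (hx₂ : x 2 ≠ 0)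
    (hy₂ : y 2 = 0) (h : ⟪x, y⟫ = 0) : sphereColor x ≠ sphereColor y := by
  simp only [sphereColor, hx₂, hy₂, ne_eq, not_false_eq_true, if_true, not_true_eq_false,
    if_false, Prod.mk.injEq, decide_eq_decide, decide_eq_false_iff_not, not_le]
  rintro ⟨h₀, h₁⟩
  rw [EuclideanSpace.inner_fin_three, hy₂, mul_zero, add_zero] at h
  rw [Ne, EuclideanSpace.eq_zero_iff_fin_three] at hy
  have hy₀ : y 0 ≠ 0 := by
    intro hy₀
    have : y 1 = 0 := by simpa [hy₀, right_ne_zero_of_mul h₁.ne] using h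
    exact hy ⟨hy₀, this, hy₂⟩
  have hprod : x 2 * x 1 * (y 0 * y 1) = -(x 2 * x 0) * y 0 ^ 2 := by
    linear_combination (x 2 * y 0) * h
  have : 0 < y 0 ^ 2 := by positivity
  simp only [hy₀, or_false] at h₀
  by_cases hp : 0 ≤ x 2 * x 0
  · nlinarith [h₀.mp hp]
  · nlinarith [mt h₀.mpr hp]

theorem sphereColor_ne_of_two_eq_zero {x y : ℝ³} (hx : x ≠ 0) (hy : y ≠ 0)
    (hx₂ : x 2 = 0) (hy₂ : y 2 = 0) (h : ⟪x, y⟫ = 0) : sphereColor x ≠ sphereColor y := by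
  simp only [sphereColor, hx₂, hy₂, ne_eq, not_true_eq_false, if_false,
    Prod.mk.injEq, decide_eq_decide, and_true]
  rw [EuclideanSpace.inner_fin_three, hy₂, mul_zero, add_zero] at h
  rw [Ne, EuclideanSpace.eq_zero_iff_fin_three] at hx hy
  intro hiff
  by_cases hx₀ : x 0 = 0
  · have hy₁ : y 1 = 0 := by simpa [hx₀, show x 1 ≠ 0 by tauto] using h
    simpa [hy₁, show y 0 ≠ 0 by tauto] using hiff.mp (Or.inr hx₀)
  by_cases hy₀ : y 0 = 0
  · have hx₁ : x 1 = 0 := by simpa [hy₀, show y 1 ≠ 0 by tauto] using h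
    simpa [hx₁, hx₀] using hiff.mpr (Or.inr hy₀)
  have hx₁ : x 1 ≠ 0 := fun hx₁ => by simp [hx₁, hx₀, hy₀] at h
  have hy₁ : y 1 ≠ 0 := fun hy₁ => by simp [hy₁, hx₀, hy₀] at h
  have hprod : x 0 * x 1 * (y 0 * y 1) = -(x 1 * y 1) ^ 2 := by
    linear_combination (x 1 * y 1) * h
  have : 0 < (x 1 * y 1) ^ 2 := by positivity
  simp only [hx₀, hy₀, or_false] at hiff
  by_cases hneg : x 0 * x 1 < 0
  · nlinarith [hiff.mp hneg]
  · nlinarith [mt hiff.mpr hneg]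

theorem sphereColor_ne {x y : ℝ³} (hx : x ≠ 0) (hy : y ≠ 0) (h : ⟪x, y⟫ = 0) :
    sphereColor x ≠ sphereColor y := by
  by_cases hx₂ : x 2 = 0 <;> by_cases hy₂ : y 2 = 0
  · exact sphereColor_ne_of_two_eq_zero hx hy hx₂ hy₂ h
  · rw [real_inner_comm] at h
    exact (sphereColor_ne_of_two_ne_zero_of_two_eq_zero hx hy₂ hx₂ h).symm
  · exact sphereColor_ne_of_two_ne_zero_of_two_eq_zero hy hx₂ hy₂ h
  · exact sphereColor_ne_of_two_ne_zero hx₂ hy₂ h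

noncomputable def sphereColoring : sphereGraph.Coloring (Bool × Bool) :=
  SimpleGraph.Coloring.mk (fun v => sphereColor v) fun {v w} h =>
    sphereColor_ne (norm_ne_zero_iff.mp (v.2.symm ▸ one_ne_zero))
      (norm_ne_zero_iff.mp (w.2.symm ▸ one_ne_zero)) h

theorem sphereGraph_colorable_four : sphereGraph.Colorable 4 := by
  simpa using sphereColoring.colorable

theorem Fin.false_of_ne_of_ne_of_ne {a b c x : Fin 3} (hab : a ≠ b) (hac : a ≠ c) (hbc : b ≠ c)
    (hxa : x ≠ a) (hxb : x ≠ b) (hxc : x ≠ c) : False := by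
  omega

theorem Fin.eq_and_eq_or_eq_and_eq_of_ne {a b c x y : Fin 3} (hab : a ≠ b) (hac : a ≠ c)
    (hbc : b ≠ c) (hx : x ≠ c) (hy : y ≠ c) (hxy : x ≠ y) :
    x = a ∧ y = b ∨ x = b ∧ y = a := by
  omega

/-- `a, b, c` are the colours of the axes `e₁, e₂, e₃` and `pₖ, mₖ` those of the two face diagonals
orthogonal to `eₖ`, e.g. `p₃, m₃` for `(1, ±1, 0)`. The body diagonals are orthogonal to the
triples taking one of `pₖ, mₖ` for each `k` with an even number of `p`s, which are the four
disjuncts. The two choices that see all three colours are complementary, so one of them has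
this parity. -/
theorem cube_body_diagonal_rainbow (a b c p₃ m₃ p₂ m₂ p₁ m₁ : Fin 3)
    (hab : a ≠ b) (hac : a ≠ c) (hbc : b ≠ c)
    (hp₃ : p₃ ≠ c) (hm₃ : m₃ ≠ c) (h₃ : p₃ ≠ m₃) (hp₂ : p₂ ≠ b) (hm₂ : m₂ ≠ b) (h₂ : p₂ ≠ m₂)
    (hp₁ : p₁ ≠ a) (hm₁ : m₁ ≠ a) (h₁ : p₁ ≠ m₁) :
    (m₃ ≠ m₂ ∧ m₃ ≠ m₁ ∧ m₂ ≠ m₁) ∨ (m₃ ≠ p₂ ∧ m₃ ≠ p₁ ∧ p₂ ≠ p₁) ∨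
      (p₃ ≠ m₂ ∧ p₃ ≠ p₁ ∧ m₂ ≠ p₁) ∨ (p₃ ≠ p₂ ∧ p₃ ≠ m₁ ∧ p₂ ≠ m₁) := by
  obtain ⟨rfl, rfl⟩ | ⟨rfl, rfl⟩ := Fin.eq_and_eq_or_eq_and_eq_of_ne hab hac hbc hp₃ hm₃ h₃ <;>
  obtain ⟨rfl, rfl⟩ | ⟨rfl, rfl⟩ :=
    Fin.eq_and_eq_or_eq_and_eq_of_ne hac hab hbc.symm hp₂ hm₂ h₂ <;>
  obtain ⟨rfl, rfl⟩ | ⟨rfl, rfl⟩ :=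
    Fin.eq_and_eq_or_eq_and_eq_of_ne hbc hab.symm hac.symm hp₁ hm₁ h₁ <;>
  tauto

theorem not_forall_inner_eq_zero_imp_ne (c : ℝ³ → Fin 3) :
    ¬ ∀ v w : ℝ³, v ≠ 0 → w ≠ 0 → ⟪v, w⟫ = 0 → c v ≠ c w := by
  intro hc
  refine (cube_body_diagonal_rainbow (c !₂[1, 0, 0]) (c !₂[0, 1, 0]) (c !₂[0, 0, 1])
      (c !₂[1, 1, 0]) (c !₂[1, -1, 0]) (c !₂[1, 0, 1]) (c !₂[1, 0, -1])
      (c !₂[0, 1, 1]) (c !₂[0, 1, -1]) ?_ ?_ ?_ ?_ ?_ ?_ ?_ ?_ ?_ ?_ ?_ ?_).elim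
    (fun h => Fin.false_of_ne_of_ne_of_ne h.1 h.2.1 h.2.2 (x := c !₂[1, 1, 1]) ?_ ?_ ?_)
    fun h => h.elim
      (fun h => Fin.false_of_ne_of_ne_of_ne h.1 h.2.1 h.2.2 (x := c !₂[1, 1, -1]) ?_ ?_ ?_)
      fun h => h.elim
        (fun h => Fin.false_of_ne_of_ne_of_ne h.1 h.2.1 h.2.2 (x := c !₂[1, -1, 1]) ?_ ?_ ?_)
        (fun h => Fin.false_of_ne_of_ne_of_ne h.1 h.2.1 h.2.2 (x := c !₂[1, -1, -1]) ?_ ?_ ?_)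
  all_goals apply hc <;> simp [← WithLp.toLp_zero, EuclideanSpace.inner_fin_three]

theorem sphereGraph_not_colorable_three : ¬ sphereGraph.Colorable 3 := by
  rintro ⟨C⟩
  apply not_forall_inner_eq_zero_imp_ne fun v =>
    if hv : v = 0 then 0 else C ⟨‖v‖⁻¹ • v, norm_smul_inv_norm hv⟩
  intro v w hv hw h
  simp only [dif_neg hv, dif_neg hw]
  apply C.valid
  change ⟪‖v‖⁻¹ • v, ‖w‖⁻¹ • w⟫ = 0
  rw [real_inner_smul_left, real_inner_smul_right, h, mul_zero, mul_zero]

theorem sphereGraph_chromaticNumber : sphereGraph.chromaticNumber = 4 :=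
  SimpleGraph.chromaticNumber_eq_iff_colorable_not_colorable.mpr
    ⟨sphereGraph_colorable_four, sphereGraph_not_colorable_three⟩
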